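/- Let w ∈ V have triangle orbit (w, σ(w), σ²(w) are F-linearly independent) and suppose the S-plane K·w has Type II or Type III. Let T be the F-span of {w, σ(w), σ²(w)}, a σ-invariant 3-dimensional F-subspace. Then ℙ(T) contains exactly g fixed points, T contains exactly g fixed lines (σ-invariant 2-dimensional F-subspaces), and σ does not act as a scalar on any of these g fixed lines. -/

import Mathlib

open Module

noncomputable section

/-- The ambient 9-dimensional space `V = K³` (an `F`-space when `K` is an `F`-algebra). -/
abbrev VK (K : Type*) := K × K × K

/-- The semilinear map `σ(x,y,z) = (z^q, x^q, y^q)` of `V = K³`. -/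
def sig (q : ℕ) {K : Type*} [Field K] (v : VK K) : VK K :=
  (v.2.2 ^ q, v.1 ^ q, v.2.1 ^ q)

/-- The S-plane through `v`, i.e. the 3-dimensional `F`-subspace `K·v`. -/
def Splane (F : Type*) [Field F] {K : Type*} [Field K] [Algebra F K]
    (v : VK K) : Submodule F (VK K) :=
  Submodule.restrictScalars F (Submodule.span K {v})

/-- `[v]` is a fixed point: `σ(v) ∈ F·v`. -/
def IsFixedPt (F : Type*) [Field F] {K : Type*} [Field K] [Algebra F K]
    (q : ℕ) (v : VK K) : Prop :=
  sig q v ∈ Submodule.span F {v}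

/-- `[v]` has collinear orbit: the `F`-span of `{v, σv, σ²v}` is 2-dimensional. -/
def Collin (F : Type*) [Field F] {K : Type*} [Field K] [Algebra F K]
    (q : ℕ) (v : VK K) : Prop :=
  finrank F (Submodule.span F {v, sig q v, sig q (sig q v)}) = 2

/-- `[v]` has triangle orbit: `v, σv, σ²v` are `F`-linearly independent. -/
def Triangle (F : Type*) [Field F] {K : Type*} [Field K] [Algebra F K]
    (q : ℕ) (v : VK K) : Prop :=
  LinearIndependent F ![v, sig q v, sig q (sig q v)]

/-- The S-plane `K·v` has Type I: `σ(v) ∈ K·v`. -/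
def TypeI {K : Type*} [Field K] (q : ℕ) (v : VK K) : Prop :=
  sig q v ∈ Submodule.span K {v}

/-- The S-plane `K·v` has Type II: `v, σv, σ²v` `K`-dependent but `σ(v) ∉ K·v`. -/
def TypeII {K : Type*} [Field K] (q : ℕ) (v : VK K) : Prop :=
  ¬ LinearIndependent K ![v, sig q v, sig q (sig q v)] ∧
    sig q v ∉ Submodule.span K {v}

/-- The S-plane `K·v` has Type III: `v, σv, σ²v` are `K`-linearly independent. -/
def TypeIII {K : Type*} [Field K] (q : ℕ) (v : VK K) : Prop :=
  LinearIndependent K ![v, sig q v, sig q (sig q v)]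

/-- `σ` acts on the subspace `W` as multiplication by a scalar of `F`. -/
def ScalarOn {F : Type*} [Field F] {K : Type*} [Field K] [Algebra F K]
    (q : ℕ) (W : Submodule F (VK K)) : Prop :=
  ∃ c : F, ∀ v ∈ W, sig q v = c • v

/-- A pointwise-fixed plane: 3-dimensional `F`-subspace on which `σ` acts as a scalar. -/
def PtwisePlane {F : Type*} [Field F] {K : Type*} [Field K] [Algebra F K]
    (q : ℕ) (W : Submodule F (VK K)) : Prop :=
  finrank F W = 3 ∧ ScalarOn q W

/-- A fixed line: 2-dimensional `F`-subspace `L` with `σ(L) = L`. -/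
def FixedLine {F : Type*} [Field F] {K : Type*} [Field K] [Algebra F K]
    (q : ℕ) (L : Submodule F (VK K)) : Prop :=
  finrank F L = 2 ∧ sig q '' (L : Set (VK K)) = (L : Set (VK K))

/-- A pointwise-fixed line: fixed line on which `σ` acts as a scalar. -/
def PtwiseLine {F : Type*} [Field F] {K : Type*} [Field K] [Algebra F K]
    (q : ℕ) (L : Submodule F (VK K)) : Prop :=
  FixedLine q L ∧ ScalarOn q L

/-- A fixed-I-line: fixed line, not scalar, contained in some `K·v`. -/
def FixedILine {F : Type*} [Field F] {K : Type*} [Field K] [Algebra F K]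
    (q : ℕ) (L : Submodule F (VK K)) : Prop :=
  FixedLine q L ∧ ¬ ScalarOn q L ∧ ∃ v : VK K, v ≠ 0 ∧ L ≤ Splane F v

/-- A fixed-II-line: fixed line, not scalar, contained in no `K·v`. -/
def FixedIILine {F : Type*} [Field F] {K : Type*} [Field K] [Algebra F K]
    (q : ℕ) (L : Submodule F (VK K)) : Prop :=
  FixedLine q L ∧ ¬ ScalarOn q L ∧ ¬ ∃ v : VK K, v ≠ 0 ∧ L ≤ Splane F v

/-- A hwise-fixed-5-space: 6-dimensional `F`-subspace `W` with `σ(W) = W` such that the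
map induced by `σ` on `V/W` is multiplication by a scalar. -/
def HFix5 {F : Type*} [Field F] {K : Type*} [Field K] [Algebra F K]
    (q : ℕ) (W : Submodule F (VK K)) : Prop :=
  finrank F W = 6 ∧ sig q '' (W : Set (VK K)) = (W : Set (VK K)) ∧
    ∃ c : F, ∀ v : VK K, sig q v - c • v ∈ W

/-- An `H_I`-5-space: a 2-dimensional `K`-subspace `U` of `V` with `σ(U) = U`. -/
def HI5 {K : Type*} [Field K] (q : ℕ) (U : Submodule K (VK K)) : Prop :=
  finrank K U = 2 ∧ sig q '' (U : Set (VK K)) = (U : Set (VK K))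

/-
With respect to the basis `w, σw, σ²w` of `T`, the `F`-linear map `σ` (Frobenius `x ↦ x^q` is
`F`-linear and `σ³ = 1`) becomes the cyclic shift of `F³`. An invariant line of the shift is an
eigenline, spanned by `(1, t², t)` with `t³ = 1`; an invariant plane `L` has a 1-dimensional
quotient on which the shift acts by some `t`, which forces `t³ = 1` and
`L = span{(-t,1,0), (0,-t,1)}`.
So both kinds are indexed by the cube roots of unity in `F`, of which there are `gcd(3, q-1)`
because `Fˣ` is cyclic of order `q - 1`. Every eigenspace of the shift is a line, so `σ` is a
scalar on no invariant plane.
-/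

section Frobenius

variable {F K : Type*} [Field F] [Fintype F] [Field K] [Algebra F K]

variable (F) in
def sigₗ : VK K →ₗ[F] VK K where
  toFun := sig (Fintype.card F)
  map_add' u v := by
    simp only [sig, Prod.fst_add, Prod.snd_add, ← FiniteField.frobeniusAlgHom_apply F, map_add,
      Prod.mk_add_mk]
  map_smul' a v := by
    simp only [sig, Prod.smul_fst, Prod.smul_snd, ← FiniteField.frobeniusAlgHom_apply F, map_smul,
      RingHom.id_apply, Prod.smul_mk]

lemma sig_sig_sig [Fintype K] {q : ℕ} (hK : Fintype.card K = q ^ 3) (v : VK K) :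
    sig q (sig q (sig q v)) = v := by
  have h (x : K) : ((x ^ q) ^ q) ^ q = x := by
    rw [← pow_mul, ← pow_mul, show q * (q * q) = q ^ 3 by ring, ← hK, FiniteField.pow_card]
  simp only [sig, h]

end Frobenius

lemma image_eq_self_iff_mapsTo {α : Type*} {f : α → α} (hf : ∀ x, f (f (f x)) = x)
    {s : Set α} : f '' s = s ↔ ∀ x ∈ s, f x ∈ s := by
  refine ⟨fun h x hx => h ▸ Set.mem_image_of_mem f hx, fun h => ?_⟩
  exact (Set.image_subset_iff.mpr h).antisymm fun x hx => ⟨f (f x), h _ (h x hx), hf x⟩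

section CyclicShift

variable {F : Type*} [Field F]

variable (F) in
def cyclicShift : (F × F × F) →ₗ[F] (F × F × F) where
  toFun v := (v.2.2, v.1, v.2.1)
  map_add' _ _ := rfl
  map_smul' _ _ := rfl

@[simp] lemma cyclicShift_apply (a b c : F) : cyclicShift F (a, b, c) = (c, a, b) := rfl

lemma cyclicShift_cyclicShift_cyclicShift (v : F × F × F) :
    cyclicShift F (cyclicShift F (cyclicShift F v)) = v := rfl

def cyclicEigenvector (t : F) : F × F × F := (1, t ^ 2, t)

lemma cyclicEigenvector_ne_zero (t : F) : cyclicEigenvector t ≠ 0 := by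
  simp [cyclicEigenvector]

lemma eq_smul_cyclicEigenvector {t : F} {v : F × F × F} (h : cyclicShift F v = t • v) :
    v = v.1 • cyclicEigenvector t := by
  obtain ⟨a, b, c⟩ := v
  simp only [cyclicShift_apply, Prod.smul_mk, smul_eq_mul, Prod.mk.injEq] at h
  obtain ⟨hc, ha, hb⟩ := h
  simp only [cyclicEigenvector, Prod.smul_mk, smul_eq_mul, Prod.mk.injEq]
  exact ⟨(mul_one a).symm, by linear_combination hb + t * hc, by linear_combination hc⟩

lemma cyclicShift_cyclicEigenvector {t : F} (ht : t ^ 3 = 1) :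
    cyclicShift F (cyclicEigenvector t) = t • cyclicEigenvector t := by
  simp only [cyclicEigenvector, cyclicShift_apply, Prod.smul_mk, smul_eq_mul, Prod.mk.injEq]
  exact ⟨by ring, by linear_combination -ht, by ring⟩

lemma pow_three_eq_one_of_cyclicShift_eq_smul {t : F} {v : F × F × F} (hv : v ≠ 0)
    (h : cyclicShift F v = t • v) : t ^ 3 = 1 := by
  obtain ⟨a, b, c⟩ := v
  simp only [cyclicShift_apply, Prod.smul_mk, smul_eq_mul, Prod.mk.injEq] at h
  obtain ⟨hc, ha, hb⟩ := h
  have ha0 : a ≠ 0 := by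
    rintro rfl
    obtain rfl : c = 0 := by simpa using hc
    obtain rfl : b = 0 := by simpa using hb
    exact hv rfl
  refine mul_right_cancel₀ ha0 ?_
  linear_combination -ha - t * hb - t ^ 2 * hc

lemma finrank_le_one_of_cyclicShift_eq_smul {Q : Submodule F (F × F × F)} {c : F}
    (h : ∀ v ∈ Q, cyclicShift F v = c • v) : finrank F Q ≤ 1 := by
  have hQ : Q ≤ F ∙ cyclicEigenvector c := fun v hv =>
    Submodule.mem_span_singleton.mpr ⟨v.1, (eq_smul_cyclicEigenvector (h v hv)).symm⟩
  exact (Submodule.finrank_mono hQ).trans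
    (finrank_span_singleton (cyclicEigenvector_ne_zero c)).le

lemma exists_eq_span_cyclicEigenvector {P : Submodule F (F × F × F)} (hP : finrank F P = 1)
    (hinv : ∀ u ∈ P, cyclicShift F u ∈ P) :
    ∃ t : F, t ^ 3 = 1 ∧ P = F ∙ cyclicEigenvector t := by
  obtain ⟨v, hvP, hv0⟩ := P.exists_mem_ne_zero_of_ne_bot (by rintro rfl; simp at hP)
  have hPv : P = F ∙ v := (Submodule.eq_of_le_of_finrank_eq
    ((Submodule.span_singleton_le_iff_mem v P).mpr hvP)
    (by rw [finrank_span_singleton hv0, hP])).symm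
  obtain ⟨t, ht⟩ := Submodule.mem_span_singleton.mp (hPv ▸ hinv v hvP)
  have hv := eq_smul_cyclicEigenvector ht.symm
  have ha : v.1 ≠ 0 := fun h => hv0 (by rw [hv, h, zero_smul])
  refine ⟨t, pow_three_eq_one_of_cyclicShift_eq_smul hv0 ht.symm, ?_⟩
  rw [hPv, hv, Submodule.span_singleton_smul_eq (Ne.isUnit ha)]

lemma cyclicShift_mem_span_cyclicEigenvector {t : F} (ht : t ^ 3 = 1) {v : F × F × F}
    (hv : v ∈ F ∙ cyclicEigenvector t) : cyclicShift F v ∈ F ∙ cyclicEigenvector t := by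
  obtain ⟨c, rfl⟩ := Submodule.mem_span_singleton.mp hv
  rw [map_smul, cyclicShift_cyclicEigenvector ht, smul_smul]
  exact Submodule.smul_mem _ _ (Submodule.mem_span_singleton_self _)

lemma span_cyclicEigenvector_injective :
    Function.Injective fun t : F => F ∙ cyclicEigenvector t := by
  intro s t h
  have hs : cyclicEigenvector s ∈ F ∙ cyclicEigenvector t := by
    dsimp only at h
    exact h ▸ Submodule.mem_span_singleton_self _
  obtain ⟨c, hc⟩ := Submodule.mem_span_singleton.mp hs
  simp only [cyclicEigenvector, Prod.smul_mk, smul_eq_mul, Prod.mk.injEq, mul_one] at hc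
  rw [← hc.2.2, hc.1, one_mul]

def cyclicInvariantPlane (t : F) : Submodule F (F × F × F) :=
  Submodule.span F {(-t, 1, 0), (0, -t, 1)}

lemma finrank_cyclicInvariantPlane (t : F) : finrank F (cyclicInvariantPlane t) = 2 := by
  have hli : LinearIndependent F ![((-t, 1, 0) : F × F × F), (0, -t, 1)] := by
    refine LinearIndependent.pair_iff.mpr fun a b h => ?_
    simp only [Prod.smul_mk, smul_eq_mul, Prod.mk_add_mk, Prod.mk_eq_zero] at h
    obtain rfl : b = 0 := by simpa using h.2.2
    exact ⟨by simpa using h.2.1, rfl⟩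
  have := finrank_span_eq_card hli
  rwa [Matrix.range_cons_cons_empty, Fintype.card_fin] at this

lemma cyclicShift_mem_cyclicInvariantPlane {t : F} (ht : t ^ 3 = 1) {v : F × F × F}
    (hv : v ∈ cyclicInvariantPlane t) : cyclicShift F v ∈ cyclicInvariantPlane t := by
  obtain ⟨a, b, rfl⟩ := Submodule.mem_span_pair.mp hv
  refine Submodule.mem_span_pair.mpr ⟨-b * t ^ 2, a - b * t, ?_⟩
  simp only [Prod.smul_mk, smul_eq_mul, Prod.mk_add_mk, cyclicShift_apply, Prod.mk.injEq]
  exact ⟨by linear_combination b * ht, by ring, by ring⟩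

lemma cyclicInvariantPlane_injective : Function.Injective (cyclicInvariantPlane (F := F)) := by
  intro s t h
  have hs : ((-s, 1, 0) : F × F × F) ∈ cyclicInvariantPlane t :=
    h ▸ Submodule.subset_span (Set.mem_insert _ _)
  obtain ⟨a, b, hab⟩ := Submodule.mem_span_pair.mp hs
  simp only [Prod.smul_mk, smul_eq_mul, Prod.mk_add_mk, Prod.mk.injEq] at hab
  obtain rfl : b = 0 := by simpa using hab.2.2
  obtain rfl : a = 1 := by simpa using hab.2.1
  simpa using hab.1.symm

lemma exists_eq_cyclicInvariantPlane {L : Submodule F (F × F × F)} (hL : finrank F L = 2)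
    (hinv : ∀ u ∈ L, cyclicShift F u ∈ L) :
    ∃ t : F, t ^ 3 = 1 ∧ L = cyclicInvariantPlane t := by
  have hdim : finrank F (F × F × F) = 3 := by simp [finrank_prod]
  have hquot : finrank F ((F × F × F) ⧸ L) = 1 := by
    have := L.finrank_quotient_add_finrank
    omega
  obtain ⟨t, ht⟩ := ((L.mapQ L (cyclicShift F) hinv).existsUnique_eq_smul_id_of_finrank_eq_one
    hquot).exists
  have key (v : F × F × F) : cyclicShift F v - t • v ∈ L := by
    have := LinearMap.congr_fun ht (Submodule.Quotient.mk v)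
    rwa [Submodule.mapQ_apply, LinearMap.smul_apply, LinearMap.id_apply,
      ← Submodule.Quotient.mk_smul, Submodule.Quotient.eq] at this
  -- For the shift `S`, `(S - t)(S² + tS + t²) = 1 - t³`, so `S - t` is onto when `t³ ≠ 1`.
  have ht3 : t ^ 3 = 1 := by
    by_contra h
    have htop : L = ⊤ := eq_top_iff.mpr fun v _ => by
      set u := cyclicShift F (cyclicShift F v) + t • cyclicShift F v + t ^ 2 • v
      have hu : (1 - t ^ 3) • v = cyclicShift F u - t • u := by
        simp only [u, map_add, map_smul, cyclicShift_cyclicShift_cyclicShift]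
        module
      rw [← L.smul_mem_iff (sub_ne_zero.mpr (Ne.symm h)), hu]
      exact key u
    rw [htop, finrank_top, hdim] at hL
    omega
  refine ⟨t, ht3, (Submodule.eq_of_le_of_finrank_eq ?_ ?_).symm⟩
  · refine Submodule.span_le.mpr ?_
    rintro _ (rfl | rfl)
    · simpa using key (1, 0, 0)
    · simpa using key (0, 1, 0)
  · rw [finrank_cyclicInvariantPlane, hL]


lemma card_cyclicShift_invariant_lines :
    Nat.card {P : Submodule F (F × F × F) //
        finrank F P = 1 ∧ ∀ u ∈ P, cyclicShift F u ∈ P} =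
      Nat.card {t : F // t ^ 3 = 1} := by
  refine (Nat.card_eq_of_bijective (fun t => ⟨F ∙ cyclicEigenvector t.1,
    finrank_span_singleton (cyclicEigenvector_ne_zero _),
    fun _ => cyclicShift_mem_span_cyclicEigenvector t.2⟩)
    ⟨fun _ _ h => Subtype.ext (span_cyclicEigenvector_injective (congrArg Subtype.val h)),
      ?_⟩).symm
  rintro ⟨P, hP, hinv⟩
  obtain ⟨t, ht, rfl⟩ := exists_eq_span_cyclicEigenvector hP hinv
  exact ⟨⟨t, ht⟩, rfl⟩

lemma card_cyclicShift_invariant_planes :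
    Nat.card {L : Submodule F (F × F × F) //
        finrank F L = 2 ∧ ∀ u ∈ L, cyclicShift F u ∈ L} =
      Nat.card {t : F // t ^ 3 = 1} := by
  refine (Nat.card_eq_of_bijective (fun t => ⟨cyclicInvariantPlane t.1,
    finrank_cyclicInvariantPlane _, fun _ => cyclicShift_mem_cyclicInvariantPlane t.2⟩)
    ⟨fun _ _ h => Subtype.ext (cyclicInvariantPlane_injective (congrArg Subtype.val h)),
      ?_⟩).symm
  rintro ⟨L, hL, hinv⟩
  obtain ⟨t, ht, rfl⟩ := exists_eq_cyclicInvariantPlane hL hinv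
  exact ⟨⟨t, ht⟩, rfl⟩

lemma card_pow_eq_one_eq_gcd [Finite F] (n : ℕ) [NeZero n] :
    Nat.card {t : F // t ^ n = 1} = Nat.gcd n (Nat.card F - 1) := by
  calc Nat.card {t : F // t ^ n = 1}
      = Nat.card (rootsOfUnity n F) :=
        Nat.card_congr ((Equiv.subtypeEquivRight fun t =>
          (Polynomial.mem_nthRoots (Nat.pos_of_neZero n)).symm).trans
          (rootsOfUnityEquivNthRoots F n).symm)
    _ = Nat.gcd (Nat.card Fˣ) n := by rw [rootsOfUnity_eq_ker, IsCyclic.card_powMonoidHom_ker]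
    _ = Nat.gcd n (Nat.card F - 1) := by rw [Nat.card_units, Nat.gcd_comm]

end CyclicShift

section Transport

variable {F M V : Type*} [Field F] [AddCommGroup M] [Module F M] [AddCommGroup V] [Module F V]
  {e : M →ₗ[F] V} {g : M →ₗ[F] M} {f : V →ₗ[F] V}

lemma finrank_comap_of_le_range (he : Function.Injective e) {P : Submodule F V}
    (hP : P ≤ LinearMap.range e) : finrank F (P.comap e) = finrank F P := by
  conv_rhs => rw [← Submodule.map_comap_eq_of_le hP]
  exact LinearEquiv.finrank_eq (Submodule.equivMapOfInjective e he _)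

def invariantSubmodulesEquiv (he : Function.Injective e) (hfe : ∀ m, f (e m) = e (g m))
    (k : ℕ) :
    {P : Submodule F V // P ≤ LinearMap.range e ∧ finrank F P = k ∧ ∀ u ∈ P, f u ∈ P} ≃
      {Q : Submodule F M // finrank F Q = k ∧ ∀ u ∈ Q, g u ∈ Q} where
  toFun P := ⟨P.1.comap e, (finrank_comap_of_le_range he P.2.1).trans P.2.2.1,
    fun m hm => by simpa only [Submodule.mem_comap, ← hfe] using P.2.2.2 _ hm⟩
  invFun Q := ⟨Q.1.map e, LinearMap.map_le_range,
    (LinearEquiv.finrank_eq (Submodule.equivMapOfInjective e he _)).symm.trans Q.2.1,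
    by rintro _ ⟨m, hm, rfl⟩; exact ⟨g m, Q.2.2 m hm, (hfe m).symm⟩⟩
  left_inv P := Subtype.ext (Submodule.map_comap_eq_of_le P.2.1)
  right_inv Q := Subtype.ext (Submodule.comap_map_eq_of_injective he Q.1)

end Transport

section OrbitCoordinates

variable {F V : Type*} [Field F] [AddCommGroup V] [Module F V]

def orbitCoords (f : V →ₗ[F] V) (w : V) : (F × F × F) →ₗ[F] V where
  toFun v := v.1 • w + v.2.1 • f w + v.2.2 • f (f w)
  map_add' u v := by
    simp only [Prod.fst_add, Prod.snd_add, add_smul]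
    abel
  map_smul' a v := by
    simp only [Prod.smul_fst, Prod.smul_snd, smul_eq_mul, RingHom.id_apply, smul_add, mul_smul]

variable {f : V →ₗ[F] V} {w : V}

lemma orbitCoords_apply (a b c : F) :
    orbitCoords f w (a, b, c) = a • w + b • f w + c • f (f w) := rfl

lemma map_orbitCoords (hw : f (f (f w)) = w) (v : F × F × F) :
    f (orbitCoords f w v) = orbitCoords f w (cyclicShift F v) := by
  obtain ⟨a, b, c⟩ := v
  simp only [orbitCoords_apply, cyclicShift_apply, map_add, map_smul, hw]
  abel

lemma range_orbitCoords :
    LinearMap.range (orbitCoords f w) = Submodule.span F {w, f w, f (f w)} := by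
  ext u
  simp only [LinearMap.mem_range, Submodule.mem_span_triple, Prod.exists, orbitCoords_apply]

lemma orbitCoords_injective (hw : LinearIndependent F ![w, f w, f (f w)]) :
    Function.Injective (orbitCoords f w) := by
  refine (injective_iff_map_eq_zero _).mpr fun ⟨a, b, c⟩ h => ?_
  have := Fintype.linearIndependent_iff.mp hw ![a, b, c]
    (by simpa [Fin.sum_univ_three, orbitCoords_apply] using h)
  simp only [Prod.mk_eq_zero]
  exact ⟨this 0, this 1, this 2⟩

lemma finrank_span_orbit (hw : LinearIndependent F ![w, f w, f (f w)]) :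
    finrank F (Submodule.span F {w, f w, f (f w)}) = 3 := by
  rw [← range_orbitCoords, LinearMap.finrank_range_of_inj (orbitCoords_injective hw)]
  simp [finrank_prod]

lemma map_mem_span_orbit (hw : f (f (f w)) = w) {u : V}
    (hu : u ∈ Submodule.span F {w, f w, f (f w)}) :
    f u ∈ Submodule.span F {w, f w, f (f w)} := by
  rw [← range_orbitCoords] at hu ⊢
  obtain ⟨v, rfl⟩ := hu
  exact ⟨cyclicShift F v, (map_orbitCoords hw v).symm⟩

lemma card_invariant_submodules_span_orbit (hw3 : f (f (f w)) = w)
    (hw : LinearIndependent F ![w, f w, f (f w)]) (k : ℕ) :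
    Nat.card {P : Submodule F V //
        P ≤ Submodule.span F {w, f w, f (f w)} ∧ finrank F P = k ∧ ∀ u ∈ P, f u ∈ P} =
      Nat.card {Q : Submodule F (F × F × F) //
        finrank F Q = k ∧ ∀ u ∈ Q, cyclicShift F u ∈ Q} := by
  rw [← range_orbitCoords]
  exact Nat.card_congr
    (invariantSubmodulesEquiv (orbitCoords_injective hw) (map_orbitCoords hw3) k)

lemma not_forall_eq_smul_of_le_span_orbit (hw3 : f (f (f w)) = w)
    (hw : LinearIndependent F ![w, f w, f (f w)]) {L : Submodule F V} (hL : finrank F L = 2)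
    (hLw : L ≤ Submodule.span F {w, f w, f (f w)}) (c : F) : ¬ ∀ v ∈ L, f v = c • v := by
  intro hc
  rw [← range_orbitCoords] at hLw
  have he := orbitCoords_injective hw
  have hQ : ∀ m ∈ L.comap (orbitCoords f w), cyclicShift F m = c • m := fun m hm =>
    he (by rw [← map_orbitCoords hw3, map_smul]; exact hc _ hm)
  have := finrank_le_one_of_cyclicShift_eq_smul hQ
  rw [finrank_comap_of_le_range he hLw, hL] at this
  omega

end OrbitCoordinates

theorem stmt16_general (q : ℕ)
    (F : Type*) [Field F] [Fintype F] (K : Type*) [Field K] [Fintype K]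
    [Algebra F K] (hF : Fintype.card F = q) (hK : Fintype.card K = q ^ 3)
    (w : VK K) (hw : Triangle F q w) :
    finrank F (Submodule.span F {w, sig q w, sig q (sig q w)}) = 3 ∧
    sig q '' ((Submodule.span F {w, sig q w, sig q (sig q w)} :
        Submodule F (VK K)) : Set (VK K)) =
      ((Submodule.span F {w, sig q w, sig q (sig q w)} :
        Submodule F (VK K)) : Set (VK K)) ∧
    Nat.card {P : Submodule F (VK K) //
        P ≤ Submodule.span F {w, sig q w, sig q (sig q w)} ∧ finrank F P = 1 ∧
          ∀ u ∈ P, sig q u ∈ P} = Nat.gcd 3 (q - 1) ∧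
    Nat.card {L : Submodule F (VK K) //
        FixedLine q L ∧ L ≤ Submodule.span F {w, sig q w, sig q (sig q w)}} =
      Nat.gcd 3 (q - 1) ∧
    (∀ L : Submodule F (VK K), FixedLine q L →
      L ≤ Submodule.span F {w, sig q w, sig q (sig q w)} → ¬ ScalarOn q L) := by
  subst hF
  have hσ3 : sigₗ F (sigₗ F (sigₗ F w)) = w := sig_sig_sig hK w
  have hw' : LinearIndependent F ![w, sigₗ F w, sigₗ F (sigₗ F w)] := hw
  have hfixed (s : Set (VK K)) :
      sig (Fintype.card F) '' s = s ↔ ∀ x ∈ s, sig (Fintype.card F) x ∈ s :=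
    image_eq_self_iff_mapsTo (sig_sig_sig hK)
  have hroots : Nat.card {t : F // t ^ 3 = 1} = Nat.gcd 3 (Fintype.card F - 1) := by
    rw [card_pow_eq_one_eq_gcd, Nat.card_eq_fintype_card]
  have hpoints := card_invariant_submodules_span_orbit hσ3 hw' 1
  have hlines := card_invariant_submodules_span_orbit hσ3 hw' 2
  rw [card_cyclicShift_invariant_lines, hroots] at hpoints
  rw [card_cyclicShift_invariant_planes, hroots] at hlines
  have hfin := finrank_span_orbit hw'
  refine ⟨hfin, (hfixed _).mpr fun _ => map_mem_span_orbit hσ3, hpoints,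
    (Nat.card_congr (Equiv.subtypeEquivRight fun L => ?_)).trans hlines,
    fun L hL hLw => not_exists.mpr (not_forall_eq_smul_of_le_span_orbit hσ3 hw' hL.1 hLw)⟩
  rw [FixedLine, hfixed]
  tauto

/-- the fixed plane spanned by a triangle orbit in a Type-II or Type-III
S-plane contains exactly g fixed points and g fixed lines, none of which is pointwise
fixed. -/
theorem stmt16 (q : ℕ) (hq : 2 < q)
    (F : Type*) [Field F] [Fintype F] (K : Type*) [Field K] [Fintype K]
    [Algebra F K] (hF : Fintype.card F = q) (hK : Fintype.card K = q ^ 3)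
    (w : VK K) (hw : Triangle F q w) (hwT : TypeII q w ∨ TypeIII q w) :
    finrank F (Submodule.span F {w, sig q w, sig q (sig q w)}) = 3 ∧
    sig q '' ((Submodule.span F {w, sig q w, sig q (sig q w)} :
        Submodule F (VK K)) : Set (VK K)) =
      ((Submodule.span F {w, sig q w, sig q (sig q w)} :
        Submodule F (VK K)) : Set (VK K)) ∧
    Nat.card {P : Submodule F (VK K) //
        P ≤ Submodule.span F {w, sig q w, sig q (sig q w)} ∧ finrank F P = 1 ∧
          ∀ u ∈ P, sig q u ∈ P} = Nat.gcd 3 (q - 1) ∧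
    Nat.card {L : Submodule F (VK K) //
        FixedLine q L ∧ L ≤ Submodule.span F {w, sig q w, sig q (sig q w)}} =
      Nat.gcd 3 (q - 1) ∧
    (∀ L : Submodule F (VK K), FixedLine q L →
      L ≤ Submodule.span F {w, sig q w, sig q (sig q w)} → ¬ ScalarOn q L) :=
  stmt16_general q F K hF hK w hw
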